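/- Erasure soundness of bidirectional typing: if Γ ⊢ P ÷ J is derivable in the bidirectional process typing system, then |Γ| ⊢ |P| ÷ |J| is derivable in the non-bidirectional typing system, where |P| erases type annotations and |·| replaces the directional judgments ⇒ and ⇐ by a single colon-typing judgment. -/

import Mathlib

set_option linter.unusedVariables false
set_option autoImplicit false

namespace DRSAX

/-! # A formalization of DRSAX (Somayyajula & Pfenning, "Dependent Type Refinements for Futures")

Addresses, labels, definition names. -/

abbrev Label := String
abbrev Addr := ℕ
abbrev DefName := String

/-! ## Assertion logic: first-order terms and assertions -/

inductive Tm : Type where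
  | var : Addr → Tm
  | unit : Tm
  | pair : Tm → Tm → Tm
  | app : Tm → Tm → Tm          -- M ‵ N  (function application)
  | tag : Label → Tm → Tm       -- k · M
  | proj : Tm → Label → Tm      -- M.k
  | fn : String → Tm → Tm       -- uninterpreted function symbols (theory extension)

inductive Assertion : Type where
  | fls : Assertion
  | tru : Assertion
  | eq : Tm → Tm → Assertion
  | isTag : Label → Tm → Assertion
  | conj : Assertion → Assertion → Assertion
  | impl : Assertion → Assertion → Assertion
  | all : (Tm → Assertion) → Assertion

/-- Models of the assertion logic: uninterpreted functions, with the value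
constructors subject to the theory of non-cyclic data structures
(injectivity, distinctness, and a rank function precluding cycles). -/
structure AModel where
  D : Type
  unitI : D
  pairI : D → D → D
  appI : D → D → D
  tagI : Label → D → D
  projI : D → Label → D
  fnI : String → D → D
  rank : D → ℕ
  pair_inj : ∀ a b a' b', pairI a b = pairI a' b' → a = a' ∧ b = b'
  tag_inj : ∀ k k' a a', tagI k a = tagI k' a' → k = k' ∧ a = a'
  unit_ne_pair : ∀ a b, unitI ≠ pairI a b
  unit_ne_tag : ∀ k a, unitI ≠ tagI k a
  pair_ne_tag : ∀ a b k c, pairI a b ≠ tagI k c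
  rank_pair_l : ∀ a b, rank a < rank (pairI a b)
  rank_pair_r : ∀ a b, rank b < rank (pairI a b)
  rank_tag : ∀ k a, rank a < rank (tagI k a)

def Tm.eval (M : AModel) (ρ : Addr → M.D) : Tm → M.D
  | .var a => ρ a
  | .unit => M.unitI
  | .pair s t => M.pairI (s.eval M ρ) (t.eval M ρ)
  | .app s t => M.appI (s.eval M ρ) (t.eval M ρ)
  | .tag k t => M.tagI k (t.eval M ρ)
  | .proj t k => M.projI (t.eval M ρ) k
  | .fn f t => M.fnI f (t.eval M ρ)

def Assertion.sat (M : AModel) (ρ : Addr → M.D) : Assertion → Prop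
  | .fls => False
  | .tru => True
  | .eq s t => s.eval M ρ = t.eval M ρ
  | .isTag k t => ∃ d, t.eval M ρ = M.tagI k d
  | .conj φ ψ => φ.sat M ρ ∧ ψ.sat M ρ
  | .impl φ ψ => φ.sat M ρ → ψ.sat M ρ
  | .all f => ∀ t : Tm, (f t).sat M ρ

/-! ## Types -/

mutual
inductive Ty : Type where
  | unit : Ty                                -- 1
  | tensor : RTy → (Tm → Ty) → Ty            -- (x : A|φ) ⊗ B(x)
  | plus : List Label → (Label → Ty) → Ty    -- ⊕{ℓ : A_ℓ}
  | arrow : RTy → (Tm → RTy) → Ty            -- (x : A|φ) → (B(x)|ψ)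
  | withR : List Label → (Label → RTy) → Ty  -- &{ℓ : A_ℓ|φ_ℓ}
  | tvar : ℕ → Ty                            -- recursive type variable X (X = A)
inductive RTy : Type where
  | mk : Ty → (Tm → Assertion) → RTy         -- A | λx. φ(x)
end

def RTy.ty : RTy → Ty | .mk A _ => A
def RTy.pred : RTy → (Tm → Assertion) | .mk _ φ => φ

/-- Contexts of refined-type bindings (telescopes). -/
abbrev Ctx := List (Addr × RTy)

def ctxSat (M : AModel) (ρ : Addr → M.D) : Ctx → Prop
  | [] => True
  | (a, A) :: Γ => (A.pred (Tm.var a)).sat M ρ ∧ ctxSat M ρ Γ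

/-! ## Process syntax -/

inductive Val : Type where
  | unit : Val                 -- ⟨⟩
  | pair : Addr → Addr → Val   -- ⟨s, t⟩
  | tag : Label → Addr → Val   -- ℓ · t

mutual
inductive Proc : Type where
  | copy : Addr → Addr → Proc                 -- t ← s (destination first)
  | cut : (Addr → Proc) → (Addr → Proc) → Proc  -- x ← P(x); Q(x)
  | write : Addr → Val → Proc                  -- t.V
  | caseOf : Addr → Cont → Proc                -- case t K
  | anno : Addr → RTy → Proc → Proc            -- (x : A|φ) :: P
  | call : DefName → List Addr → Addr → Proc   -- f(s̄, t)
inductive Cont : Type where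
  | unit : Proc → Cont                         -- ⟨⟩ ⇒ P
  | pair : (Addr → Addr → Proc) → Cont         -- ⟨x,y⟩ ⇒ P(x,y)
  | branches : (Label → Addr → Proc) → Cont    -- {ℓ·x ⇒ P_ℓ(x)}
end

/-- Telescopes of argument types with a result type, for definition signatures. -/
inductive Tele : Type where
  | ret : RTy → Tele
  | arg : RTy → (Tm → Tele) → Tele

/-- An ambient signature: equirecursive type definitions X = A, an assertion-logic
theory (e.g. axioms for uninterpreted functions), and typed recursive process
definitions f(x̄ : 𝒜̄, y : 𝒞) = P. -/
structure Sig where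
  tydefs : ℕ → Ty
  theory : Set Assertion
  defs : DefName → Option (Tele × (List Addr → Addr → Proc))

/-- Semantic entailment in the assertion logic: truth in all models of the theory. -/
def Entails (Th : Set Assertion) (Γ : Ctx) (φ : Assertion) : Prop :=
  ∀ (M : AModel) (ρ : Addr → M.D), (∀ ψ ∈ Th, ψ.sat M ρ) → ctxSat M ρ Γ → φ.sat M ρ

/-! ## Subtyping (≤Pred, ≤1, ≤⊗, ≤→, ≤⊕, ≤&, and recursive-type unfolding).

Remark: the paper's subtyping is a *mixed inductive-coinductive* system whose
only coinductive premises are those of the recursive-type unfolding rules; we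
present it here as an inference system with the same rules. -/

mutual
inductive Sub (Sg : Sig) : Ctx → Ty → Ty → Prop where
  | unit {Γ : Ctx} : Sub Sg Γ .unit .unit
  | tensor {Γ : Ctx} {A A' : RTy} {C D : Tm → Ty} :
      RSub Sg Γ A A' →
      (∀ a : Addr, Sub Sg ((a, A) :: Γ) (C (Tm.var a)) (D (Tm.var a))) →
      Sub Sg Γ (.tensor A C) (.tensor A' D)
  | arrow {Γ : Ctx} {A A' : RTy} {B B' : Tm → RTy} :
      RSub Sg Γ A A' →
      (∀ a : Addr, RSub Sg ((a, A) :: Γ) (B (Tm.var a)) (B' (Tm.var a))) →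
      Sub Sg Γ (.arrow A' B) (.arrow A B')
  | plus {Γ : Ctx} {S T : List Label} {A B : Label → Ty} :
      S ⊆ T → (∀ ℓ ∈ S, Sub Sg Γ (A ℓ) (B ℓ)) →
      Sub Sg Γ (.plus S A) (.plus T B)
  | withR {Γ : Ctx} {S T : List Label} {A B : Label → RTy} :
      T ⊆ S → (∀ ℓ ∈ T, RSub Sg Γ (A ℓ) (B ℓ)) →
      Sub Sg Γ (.withR S A) (.withR T B)
  | recL {Γ : Ctx} {X : ℕ} {B : Ty} :
      Sub Sg Γ (Sg.tydefs X) B → Sub Sg Γ (.tvar X) B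
  | recR {Γ : Ctx} {X : ℕ} {A : Ty} :
      Sub Sg Γ A (Sg.tydefs X) → Sub Sg Γ A (.tvar X)
inductive RSub (Sg : Sig) : Ctx → RTy → RTy → Prop where
  | pred {Γ : Ctx} {A B : Ty} {φ ψ : Tm → Assertion} :
      Sub Sg Γ A B →
      (∀ a : Addr, Entails Sg.theory ((a, .mk A φ) :: Γ) (ψ (Tm.var a))) →
      RSub Sg Γ (.mk A φ) (.mk B ψ)
end

/-! ## Bidirectional process typing -/

inductive Dir : Type where
  | syn  -- ⇒
  | chk  -- ⇐

structure Jdg where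
  dir : Dir
  addr : Addr
  ty : RTy

abbrev BCtx := List Jdg

def eraseB (Γ : BCtx) : Ctx := Γ.map fun j => (j.addr, j.ty)

/-- Matching a list of argument addresses against a telescope (for definition calls). -/
inductive CallArgs (Γ : BCtx) : List Addr → Tele → RTy → Prop where
  | nil {C : RTy} : CallArgs Γ [] (.ret C) C
  | cons {x : Addr} {xs : List Addr} {A : RTy} {T : Tm → Tele} {C : RTy} :
      (Jdg.mk .chk x A) ∈ Γ → CallArgs Γ xs (T (Tm.var x)) C →
      CallArgs Γ (x :: xs) (.arg A T) C

/-- The conjunction of the component refinements of a lazy record, stated of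
the record's projections (used by &R to verify the record's postcondition). -/
def withAnd (S : List Label) (A : Label → RTy) (t : Tm) : Assertion :=
  S.foldr (fun ℓ acc => .conj ((A ℓ).pred (Tm.proj t ℓ)) acc) .tru

/-- The refinement of an applied function, stated of an address of function type
(used by →R to verify the function's postcondition without reifying its body). -/
def arrowSpec (A : RTy) (B : Tm → RTy) (t : Tm) : Assertion :=
  .all fun v => .impl (A.pred v) ((B v).pred (.app t v))

inductive BTyp (Sg : Sig) : BCtx → Proc → Jdg → Prop where
  -- structural rules
  | weak {Γ : BCtx} {j : Jdg} {P : Proc} {J : Jdg} :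
      BTyp Sg Γ P J → BTyp Sg (j :: Γ) P J
  | exch {Γ Γ' : BCtx} {P : Proc} {J : Jdg} :
      Γ.Perm Γ' → BTyp Sg Γ P J → BTyp Sg Γ' P J
  -- subsumption (≤R / ≤L)
  | subR {Γ : BCtx} {P : Proc} {a : Addr} {A B : RTy} :
      BTyp Sg Γ P ⟨.syn, a, A⟩ → RSub Sg (eraseB Γ) A B → BTyp Sg Γ P ⟨.chk, a, B⟩
  | subL {Γ : BCtx} {P : Proc} {x : Addr} {A B : RTy} {J : Jdg} :
      RSub Sg (eraseB Γ) A B → BTyp Sg (⟨.syn, x, B⟩ :: Γ) P J →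
      BTyp Sg (⟨.chk, x, A⟩ :: Γ) P J
  -- type annotation (AnnoR / AnnoL)
  | annoR {Γ : BCtx} {P : Proc} {a : Addr} {A : RTy} :
      BTyp Sg Γ P ⟨.chk, a, A⟩ → BTyp Sg Γ (.anno a A P) ⟨.syn, a, A⟩
  | annoL {Γ : BCtx} {P : Proc} {x : Addr} {A : RTy} {J : Jdg} :
      BTyp Sg (⟨.chk, x, A⟩ :: Γ) P J → BTyp Sg (⟨.syn, x, A⟩ :: Γ) (.anno x A P) J
  -- cut / snips
  | cutP {Γ : BCtx} {P Q : Addr → Proc} {A : RTy} {J : Jdg} :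
      (∀ a : Addr, BTyp Sg Γ (P a) ⟨.chk, a, A⟩) →
      (∀ a : Addr, BTyp Sg (⟨.syn, a, A⟩ :: Γ) (Q a) J) →
      BTyp Sg Γ (.cut P Q) J
  | cutN {Γ : BCtx} {P Q : Addr → Proc} {A : RTy} {J : Jdg} :
      (∀ a : Addr, BTyp Sg Γ (P a) ⟨.syn, a, A⟩) →
      (∀ a : Addr, BTyp Sg (⟨.chk, a, A⟩ :: Γ) (Q a) J) →
      BTyp Sg Γ (.cut P Q) J
  -- identity
  | idP {Γ : BCtx} {x y : Addr} {A : RTy} :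
      (Jdg.mk .syn x A) ∈ Γ → BTyp Sg Γ (.copy y x) ⟨.chk, y, A⟩
  | idN {Γ : BCtx} {x y : Addr} {A : RTy} :
      (Jdg.mk .chk x A) ∈ Γ → BTyp Sg Γ (.copy y x) ⟨.syn, y, A⟩
  -- unit
  | unitR {Γ : BCtx} {a : Addr} {φ : Tm → Assertion} :
      Entails Sg.theory (eraseB Γ) (φ .unit) →
      BTyp Sg Γ (.write a .unit) ⟨.chk, a, .mk .unit φ⟩
  | unitL {Γ : BCtx} {x : Addr} {φ : Tm → Assertion} {P : Proc} {J : Jdg} :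
      (Jdg.mk .syn x (.mk .unit φ)) ∈ Γ → BTyp Sg Γ P J →
      BTyp Sg Γ (.caseOf x (.unit P)) J
  -- dependent eager pairs
  | tensorR {Γ : BCtx} {x y z : Addr} {A : RTy} {B : Tm → Ty} {ψ : Tm → Assertion} :
      (Jdg.mk .chk x A) ∈ Γ →
      (Jdg.mk .chk y (.mk (B (Tm.var x)) (fun _ => ψ (.pair (.var x) (.var y))))) ∈ Γ →
      BTyp Sg Γ (.write z (.pair x y)) ⟨.chk, z, .mk (.tensor A B) ψ⟩
  | tensorL {Γ : BCtx} {z : Addr} {A : RTy} {B : Tm → Ty} {ψ : Tm → Assertion}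
      {P : Addr → Addr → Proc} {J : Jdg} :
      (Jdg.mk .syn z (.mk (.tensor A B) ψ)) ∈ Γ →
      (∀ x y : Addr, BTyp Sg
        (⟨.syn, x, A⟩ ::
         ⟨.syn, y, .mk (B (Tm.var x)) (fun _ => ψ (.pair (.var x) (.var y)))⟩ ::
         ⟨.syn, z, .mk (.tensor A B)
            (fun t => .conj (ψ t) (.eq t (.pair (.var x) (.var y))))⟩ :: Γ)
        (P x y) J) →
      BTyp Sg Γ (.caseOf z (.pair P)) J
  -- dependent functions
  | arrowR {Γ : BCtx} {z : Addr} {A : RTy} {B : Tm → RTy} {χ : Tm → Assertion}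
      {P : Addr → Addr → Proc} :
      (∀ x y : Addr, BTyp Sg (⟨.syn, x, A⟩ :: Γ) (P x y) ⟨.chk, y, B (Tm.var x)⟩) →
      (∀ a : Addr, Entails Sg.theory
        ((a, .mk (.arrow A B) (arrowSpec A B)) :: eraseB Γ) (χ (Tm.var a))) →
      BTyp Sg Γ (.caseOf z (.pair P)) ⟨.chk, z, .mk (.arrow A B) χ⟩
  | arrowL {Γ : BCtx} {x y z : Addr} {A : RTy} {B : Tm → RTy} {χ : Tm → Assertion} :
      (Jdg.mk .syn z (.mk (.arrow A B) χ)) ∈ Γ →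
      (Jdg.mk .chk x A) ∈ Γ →
      BTyp Sg Γ (.write z (.pair x y)) ⟨.syn, y, B (Tm.var x)⟩
  -- labelled sums
  | plusR {Γ : BCtx} {x y : Addr} {k : Label} {S : List Label} {A : Label → Ty}
      {φ : Tm → Assertion} :
      k ∈ S →
      (Jdg.mk .chk x (.mk (A k) (fun _ => φ (.tag k (.var x))))) ∈ Γ →
      BTyp Sg Γ (.write y (.tag k x)) ⟨.chk, y, .mk (.plus S A) φ⟩
  | plusL {Γ : BCtx} {y : Addr} {S : List Label} {A : Label → Ty} {φ : Tm → Assertion}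
      {P : Label → Addr → Proc} {J : Jdg} :
      (Jdg.mk .syn y (.mk (.plus S A) φ)) ∈ Γ →
      (∀ k ∈ S, ∀ x : Addr, BTyp Sg
        (⟨.syn, x, .mk (A k) (fun _ => φ (.tag k (.var x)))⟩ ::
         ⟨.syn, y, .mk (.plus S A)
            (fun t => .conj (φ t) (.eq t (.tag k (.var x))))⟩ :: Γ)
        (P k x) J) →
      BTyp Sg Γ (.caseOf y (.branches P)) J
  -- lazy records
  | withRR {Γ : BCtx} {y : Addr} {S : List Label} {A : Label → RTy} {ψ : Tm → Assertion}
      {P : Label → Addr → Proc} :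
      (∀ k ∈ S, ∀ x : Addr, BTyp Sg Γ (P k x) ⟨.chk, x, A k⟩) →
      (∀ a : Addr, Entails Sg.theory
        ((a, .mk (.withR S A) (withAnd S A)) :: eraseB Γ) (ψ (Tm.var a))) →
      BTyp Sg Γ (.caseOf y (.branches P)) ⟨.chk, y, .mk (.withR S A) ψ⟩
  | withL {Γ : BCtx} {x y : Addr} {k : Label} {S : List Label} {A : Label → RTy}
      {ψ : Tm → Assertion} :
      k ∈ S →
      (Jdg.mk .syn y (.mk (.withR S A) ψ)) ∈ Γ →
      BTyp Sg Γ (.write y (.tag k x)) ⟨.syn, x, A k⟩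
  -- definition calls (assume–guarantee: the call outputs its ascribed signature)
  | call {Γ : BCtx} {f : DefName} {xs : List Addr} {y : Addr}
      {T : Tele} {body : List Addr → Addr → Proc} {C : RTy} :
      Sg.defs f = some (T, body) → CallArgs Γ xs T C →
      BTyp Sg Γ (.call f xs y) ⟨.syn, y, C⟩

/-- The context and result type induced by a telescope at given argument addresses. -/
def teleCtxB : List Addr → Tele → Option (BCtx × RTy)
  | [], .ret C => some ([], C)
  | x :: xs, .arg A T =>
      (teleCtxB xs (T (Tm.var x))).map fun p => (⟨.syn, x, A⟩ :: p.1, p.2)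
  | _, _ => none

/-- Well-formedness of the signature: each definition body checks against the
definition's ascribed signature.  Since recursive calls are typed by the `call`
axiom (assume–guarantee), this captures the circular (mixed inductive-coinductive)
typing of recursive definitions. -/
def SigWF (Sg : Sig) : Prop :=
  ∀ f T body, Sg.defs f = some (T, body) →
    ∀ (xs : List Addr) (y : Addr) (Γ : BCtx) (C : RTy),
      (y :: xs).Nodup → teleCtxB xs T = some (Γ, C) →
      BTyp Sg Γ (body xs y) ⟨.chk, y, C⟩

/-! ## Non-bidirectional typing: directions collapsed to (:), annotation rules removed -/

inductive CallArgsN (Γ : Ctx) : List Addr → Tele → RTy → Prop where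
  | nil {C : RTy} : CallArgsN Γ [] (.ret C) C
  | cons {x : Addr} {xs : List Addr} {A : RTy} {T : Tm → Tele} {C : RTy} :
      (x, A) ∈ Γ → CallArgsN Γ xs (T (Tm.var x)) C →
      CallArgsN Γ (x :: xs) (.arg A T) C

inductive NTyp (Sg : Sig) : Ctx → Proc → Addr × RTy → Prop where
  | weak {Γ : Ctx} {b : Addr × RTy} {P : Proc} {J : Addr × RTy} :
      NTyp Sg Γ P J → NTyp Sg (b :: Γ) P J
  | exch {Γ Γ' : Ctx} {P : Proc} {J : Addr × RTy} :
      Γ.Perm Γ' → NTyp Sg Γ P J → NTyp Sg Γ' P J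
  | subR {Γ : Ctx} {P : Proc} {a : Addr} {A B : RTy} :
      NTyp Sg Γ P (a, A) → RSub Sg Γ A B → NTyp Sg Γ P (a, B)
  | subL {Γ : Ctx} {P : Proc} {x : Addr} {A B : RTy} {J : Addr × RTy} :
      RSub Sg Γ A B → NTyp Sg ((x, B) :: Γ) P J → NTyp Sg ((x, A) :: Γ) P J
  | cutP {Γ : Ctx} {P Q : Addr → Proc} {A : RTy} {J : Addr × RTy} :
      (∀ a : Addr, NTyp Sg Γ (P a) (a, A)) →
      (∀ a : Addr, NTyp Sg ((a, A) :: Γ) (Q a) J) →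
      NTyp Sg Γ (.cut P Q) J
  | idP {Γ : Ctx} {x y : Addr} {A : RTy} :
      (x, A) ∈ Γ → NTyp Sg Γ (.copy y x) (y, A)
  | unitR {Γ : Ctx} {a : Addr} {φ : Tm → Assertion} :
      Entails Sg.theory Γ (φ .unit) →
      NTyp Sg Γ (.write a .unit) (a, .mk .unit φ)
  | unitL {Γ : Ctx} {x : Addr} {φ : Tm → Assertion} {P : Proc} {J : Addr × RTy} :
      (x, RTy.mk .unit φ) ∈ Γ → NTyp Sg Γ P J →
      NTyp Sg Γ (.caseOf x (.unit P)) J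
  | tensorR {Γ : Ctx} {x y z : Addr} {A : RTy} {B : Tm → Ty} {ψ : Tm → Assertion} :
      (x, A) ∈ Γ →
      (y, RTy.mk (B (Tm.var x)) (fun _ => ψ (.pair (.var x) (.var y)))) ∈ Γ →
      NTyp Sg Γ (.write z (.pair x y)) (z, .mk (.tensor A B) ψ)
  | tensorL {Γ : Ctx} {z : Addr} {A : RTy} {B : Tm → Ty} {ψ : Tm → Assertion}
      {P : Addr → Addr → Proc} {J : Addr × RTy} :
      (z, RTy.mk (.tensor A B) ψ) ∈ Γ →
      (∀ x y : Addr, NTyp Sg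
        ((x, A) ::
         (y, RTy.mk (B (Tm.var x)) (fun _ => ψ (.pair (.var x) (.var y)))) ::
         (z, RTy.mk (.tensor A B)
            (fun t => .conj (ψ t) (.eq t (.pair (.var x) (.var y))))) :: Γ)
        (P x y) J) →
      NTyp Sg Γ (.caseOf z (.pair P)) J
  | arrowR {Γ : Ctx} {z : Addr} {A : RTy} {B : Tm → RTy} {χ : Tm → Assertion}
      {P : Addr → Addr → Proc} :
      (∀ x y : Addr, NTyp Sg ((x, A) :: Γ) (P x y) (y, B (Tm.var x))) →
      (∀ a : Addr, Entails Sg.theory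
        ((a, .mk (.arrow A B) (arrowSpec A B)) :: Γ) (χ (Tm.var a))) →
      NTyp Sg Γ (.caseOf z (.pair P)) (z, .mk (.arrow A B) χ)
  | arrowL {Γ : Ctx} {x y z : Addr} {A : RTy} {B : Tm → RTy} {χ : Tm → Assertion} :
      (z, RTy.mk (.arrow A B) χ) ∈ Γ →
      (x, A) ∈ Γ →
      NTyp Sg Γ (.write z (.pair x y)) (y, B (Tm.var x))
  | plusR {Γ : Ctx} {x y : Addr} {k : Label} {S : List Label} {A : Label → Ty}
      {φ : Tm → Assertion} :
      k ∈ S →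
      (x, RTy.mk (A k) (fun _ => φ (.tag k (.var x)))) ∈ Γ →
      NTyp Sg Γ (.write y (.tag k x)) (y, .mk (.plus S A) φ)
  | plusL {Γ : Ctx} {y : Addr} {S : List Label} {A : Label → Ty} {φ : Tm → Assertion}
      {P : Label → Addr → Proc} {J : Addr × RTy} :
      (y, RTy.mk (.plus S A) φ) ∈ Γ →
      (∀ k ∈ S, ∀ x : Addr, NTyp Sg
        ((x, RTy.mk (A k) (fun _ => φ (.tag k (.var x)))) ::
         (y, RTy.mk (.plus S A)
            (fun t => .conj (φ t) (.eq t (.tag k (.var x))))) :: Γ)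
        (P k x) J) →
      NTyp Sg Γ (.caseOf y (.branches P)) J
  | withRR {Γ : Ctx} {y : Addr} {S : List Label} {A : Label → RTy} {ψ : Tm → Assertion}
      {P : Label → Addr → Proc} :
      (∀ k ∈ S, ∀ x : Addr, NTyp Sg Γ (P k x) (x, A k)) →
      (∀ a : Addr, Entails Sg.theory
        ((a, .mk (.withR S A) (withAnd S A)) :: Γ) (ψ (Tm.var a))) →
      NTyp Sg Γ (.caseOf y (.branches P)) (y, .mk (.withR S A) ψ)
  | withL {Γ : Ctx} {x y : Addr} {k : Label} {S : List Label} {A : Label → RTy}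
      {ψ : Tm → Assertion} :
      k ∈ S →
      (y, RTy.mk (.withR S A) ψ) ∈ Γ →
      NTyp Sg Γ (.write y (.tag k x)) (x, A k)
  | call {Γ : Ctx} {f : DefName} {xs : List Addr} {y : Addr}
      {T : Tele} {body : List Addr → Addr → Proc} {C : RTy} :
      Sg.defs f = some (T, body) → CallArgsN Γ xs T C →
      NTyp Sg Γ (.call f xs y) (y, C)

def teleCtxN : List Addr → Tele → Option (Ctx × RTy)
  | [], .ret C => some ([], C)
  | x :: xs, .arg A T =>
      (teleCtxN xs (T (Tm.var x))).map fun p => ((x, A) :: p.1, p.2)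
  | _, _ => none

def NSigWF (Sg : Sig) : Prop :=
  ∀ f T body, Sg.defs f = some (T, body) →
    ∀ (xs : List Addr) (y : Addr) (Γ : Ctx) (C : RTy),
      (y :: xs).Nodup → teleCtxN xs T = some (Γ, C) →
      NTyp Sg Γ (body xs y) (y, C)

/-! ## Erasure of type annotations and of directions -/

mutual
def Proc.erase : Proc → Proc
  | .copy a b => .copy a b
  | .cut P Q => .cut (fun x => Proc.erase (P x)) (fun x => Proc.erase (Q x))
  | .write a V => .write a V
  | .caseOf a K => .caseOf a (Cont.erase K)
  | .anno _ _ P => Proc.erase P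
  | .call f xs y => .call f xs y
def Cont.erase : Cont → Cont
  | .unit P => .unit (Proc.erase P)
  | .pair P => .pair (fun x y => Proc.erase (P x y))
  | .branches P => .branches (fun k x => Proc.erase (P k x))
end

def Jdg.erase (j : Jdg) : Addr × RTy := (j.addr, j.ty)

/-! ## Configurations, reduction, and configuration typing -/

inductive Obj : Type where
  | proc : Addr → Proc → Obj     -- proc(a, P)
  | cellV : Addr → Val → Obj     -- !cell(a, V)
  | cellK : Addr → Cont → Obj    -- !cell(a, K)

abbrev Config := Multiset Obj

def Obj.dest : Obj → Addr
  | .proc a _ => a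
  | .cellV a _ => a
  | .cellK a _ => a

/-- Passing a value to a continuation: V ▷ K. -/
def Val.pass : Val → Cont → Option Proc
  | .unit, .unit P => some P
  | .pair a b, .pair P => some (P a b)
  | .tag k a, .branches P => some (P k a)
  | _, _ => none

inductive Step (Sg : Sig) : Config → Config → Prop where
  | copyV {a b : Addr} {V : Val} {C : Config} :
      Step Sg (.cellV a V ::ₘ .proc b (.copy b a) ::ₘ C)
              (.cellV a V ::ₘ .cellV b V ::ₘ C)
  | copyK {a b : Addr} {K : Cont} {C : Config} :
      Step Sg (.cellK a K ::ₘ .proc b (.copy b a) ::ₘ C)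
              (.cellK a K ::ₘ .cellK b K ::ₘ C)
  | cut {a c : Addr} {P Q : Addr → Proc} {C : Config} :
      (∀ o ∈ (Obj.proc c (.cut P Q) ::ₘ C), Obj.dest o ≠ a) →
      Step Sg (.proc c (.cut P Q) ::ₘ C)
              (.proc a (P a) ::ₘ .proc c (Q a) ::ₘ C)
  | passV {a c : Addr} {V : Val} {K : Cont} {P : Proc} {C : Config} :
      V.pass K = some P →
      Step Sg (.cellK a K ::ₘ .proc c (.write a V) ::ₘ C)
              (.cellK a K ::ₘ .proc c P ::ₘ C)
  | matchV {a c : Addr} {V : Val} {K : Cont} {P : Proc} {C : Config} :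
      V.pass K = some P →
      Step Sg (.cellV a V ::ₘ .proc c (.caseOf a K) ::ₘ C)
              (.cellV a V ::ₘ .proc c P ::ₘ C)
  | call {a : Addr} {f : DefName} {xs : List Addr}
      {T : Tele} {body : List Addr → Addr → Proc} {C : Config} :
      Sg.defs f = some (T, body) →
      Step Sg (.proc a (.call f xs a) ::ₘ C) (.proc a (body xs a) ::ₘ C)
  | anno {a x : Addr} {A : RTy} {P : Proc} {C : Config} :
      Step Sg (.proc a (.anno x A P) ::ₘ C) (.proc a P ::ₘ C)
  | writeV {a : Addr} {V : Val} {C : Config} :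
      Step Sg (.proc a (.write a V) ::ₘ C) (.cellV a V ::ₘ C)
  | writeK {a : Addr} {K : Cont} {C : Config} :
      Step Sg (.proc a (.caseOf a K) ::ₘ C) (.cellK a K ::ₘ C)

/-- A final configuration consists only of cells. -/
def Config.Final (C : Config) : Prop := ∀ o ∈ C, ∀ (a : Addr) (P : Proc), o ≠ Obj.proc a P

/-- Context subtyping: contexts viewed as iterated dependent pair types. -/
inductive CtxSub (Sg : Sig) : Ctx → Ctx → Prop where
  | nil : CtxSub Sg [] []
  | cons {a : Addr} {A B : RTy} {Δ Γ : Ctx} :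
      RSub Sg Γ A B → CtxSub Sg Δ Γ → CtxSub Sg ((a, A) :: Δ) ((a, B) :: Γ)

/-- Configuration typing Γ ⊢ C ÷ Δ, with subtyping slack in the `proc` rule. -/
inductive CTyp (Sg : Sig) : Ctx → Config → Ctx → Prop where
  | empty {Γ : Ctx} : CTyp Sg Γ 0 Γ
  | join {Γ Γ' Δ : Ctx} {C C' : Config} :
      CTyp Sg Γ C Γ' → CTyp Sg Γ' C' Δ → CTyp Sg Γ (C + C') Δ
  | proc {Δ Γ : Ctx} {P : Proc} {a : Addr} {A B : RTy} :
      CtxSub Sg Δ Γ → NTyp Sg Γ P (a, A) → RSub Sg Γ A B →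
      CTyp Sg Δ {Obj.proc a P} ((a, B) :: Δ)
  | cellV {Γ Δ : Ctx} {a : Addr} {V : Val} :
      CTyp Sg Γ {Obj.proc a (.write a V)} Δ → CTyp Sg Γ {Obj.cellV a V} Δ
  | cellK {Γ Δ : Ctx} {a : Addr} {K : Cont} :
      CTyp Sg Γ {Obj.proc a (.caseOf a K)} Δ → CTyp Sg Γ {Obj.cellK a K} Δ

/-! ## Purely positive types, observable satisfaction, and safety -/

inductive PurelyPos (Sg : Sig) : Ty → Prop where
  | unit : PurelyPos Sg .unit
  | tensor {A : RTy} {B : Tm → Ty} :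
      PurelyPos Sg A.ty → (∀ t : Tm, PurelyPos Sg (B t)) → PurelyPos Sg (.tensor A B)
  | plus {S : List Label} {A : Label → Ty} :
      (∀ ℓ ∈ S, PurelyPos Sg (A ℓ)) → PurelyPos Sg (.plus S A)
  | tvar {X : ℕ} : PurelyPos Sg (Sg.tydefs X) → PurelyPos Sg (.tvar X)

def PurelyPosCtx (Sg : Sig) (Γ : Ctx) : Prop := ∀ p ∈ Γ, PurelyPos Sg (Prod.snd p).ty

/-- The first-order term denoted by a stored value. -/
def Val.tm : Val → Tm
  | .unit => .unit
  | .pair a b => .pair (.var a) (.var b)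
  | .tag k a => .tag k (.var a)

/-- Observable satisfaction F ⊨ Γ⁺⁺. -/
inductive OSat (Sg : Sig) : Config → Ctx → Prop where
  | nil : OSat Sg 0 []
  | cons {F : Config} {Γ : Ctx} {a : Addr} {V : Val} {A : RTy} :
      OSat Sg F Γ → Entails Sg.theory Γ (A.pred V.tm) →
      OSat Sg (Obj.cellV a V ::ₘ F) ((a, A) :: Γ)

/-- A final configuration is Γ-safe when every purely positive subcontext of Γ is
observably satisfied by some subconfiguration. -/
def FinalSafe (Sg : Sig) (F : Config) (Γ : Ctx) : Prop :=
  ∀ Γpp : Ctx, Γpp.Sublist Γ → PurelyPosCtx Sg Γpp → ∃ F' : Config, F' ≤ F ∧ OSat Sg F' Γpp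

/-- One step of the coinductive safety predicate. -/
def SafeStep (Sg : Sig) (Γ : Ctx) (X : Set Config) : Set Config :=
  {C | (C.Final ∧ FinalSafe Sg C Γ) ∨
       ((∃ C', Step Sg C C') ∧ ∀ C', Step Sg C C' → C' ∈ X)}

/-- Γ-safety: the greatest fixed point of `SafeStep` (coinductively defined). -/
def Safe (Sg : Sig) (Γ : Ctx) : Set Config := ⋃₀ {X : Set Config | X ⊆ SafeStep Sg Γ X}

/-! ## Heads of types (for inversion modulo subtyping) -/

inductive Head : Type where
  | unit | tensor | plus | arrow | withR

inductive HasHead (Sg : Sig) : Ty → Head → Prop where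
  | unit : HasHead Sg .unit .unit
  | tensor {A : RTy} {B : Tm → Ty} : HasHead Sg (.tensor A B) .tensor
  | plus {S : List Label} {A : Label → Ty} : HasHead Sg (.plus S A) .plus
  | arrow {A : RTy} {B : Tm → RTy} : HasHead Sg (.arrow A B) .arrow
  | withR {S : List Label} {A : Label → RTy} : HasHead Sg (.withR S A) .withR
  | tvar {X : ℕ} {h : Head} : HasHead Sg (Sg.tydefs X) h → HasHead Sg (.tvar X) h

/-- Contractiveness of the recursive type definitions: every definition unfolds
to a structural type constructor. -/
def Contractive (Sg : Sig) : Prop := ∀ X : ℕ, ∃ h, HasHead Sg (Sg.tydefs X) h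

/-! Each bidirectional rule erases to its colon counterpart: the two identity rules and the
two cut rules collapse to `idP` and `cutP`, and an annotation vanishes together with the
direction it switches. Calls are typed by their ascribed signature, so the coinductive
typing of definition bodies never enters and plain induction on the derivation suffices. -/

lemma erase_mem_eraseB {Γ : BCtx} {j : Jdg} (h : j ∈ Γ) : j.erase ∈ eraseB Γ :=
  List.mem_map_of_mem h

lemma CallArgs.erase {Γ : BCtx} {xs : List Addr} {T : Tele} {C : RTy}
    (h : CallArgs Γ xs T C) : CallArgsN (eraseB Γ) xs T C := by
  induction h with
  | nil => exact .nil
  | cons hx _ ih => exact .cons (erase_mem_eraseB hx) ih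

/-- Soundness of bidirectional typing: if Γ ⊢ P ÷ J bidirectionally,
then |Γ| ⊢ |P| ÷ |J| in the non-bidirectional system (annotations erased,
directions collapsed to a single colon-typing judgment). -/
theorem bidir_sound (Sg : Sig) (Γ : BCtx) (P : Proc) (J : Jdg)
    (h : BTyp Sg Γ P J) : NTyp Sg (eraseB Γ) P.erase J.erase := by
  induction h with
  | weak _ ih => exact .weak ih
  | exch hperm _ ih => exact .exch (hperm.map _) ih
  | subR _ hsub ih => exact .subR ih hsub
  | subL hsub _ ih => exact .subL hsub ih
  | annoR _ ih => exact ih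
  | annoL _ ih => exact ih
  | cutP _ _ ihP ihQ => exact .cutP ihP ihQ
  | cutN _ _ ihP ihQ => exact .cutP ihP ihQ
  | idP hx => exact .idP (erase_mem_eraseB hx)
  | idN hx => exact .idP (erase_mem_eraseB hx)
  | unitR hent => exact .unitR hent
  | unitL hx _ ih => exact .unitL (erase_mem_eraseB hx) ih
  | tensorR hx hy => exact .tensorR (erase_mem_eraseB hx) (erase_mem_eraseB hy)
  | tensorL hz _ ih => exact .tensorL (erase_mem_eraseB hz) ih
  | arrowR _ hent ih => exact .arrowR ih hent
  | arrowL hz hx => exact .arrowL (erase_mem_eraseB hz) (erase_mem_eraseB hx)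
  | plusR hk hx => exact .plusR hk (erase_mem_eraseB hx)
  | plusL hy _ ih => exact .plusL (erase_mem_eraseB hy) ih
  | withRR _ hent ih => exact .withRR ih hent
  | withL hk hy => exact .withL hk (erase_mem_eraseB hy)
  | call hdef hargs => exact .call hdef hargs.erase

end DRSAX
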